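/- arXiv:2508.06370 — 3 statements merged into one kernel-verified Lean document; each statement's English description precedes it below -/
import Mathlib

section
/- The dense local order S(2) has a local SWIR: there exists a ternary relation on the nonempty finite subsets of S(2) satisfying (Inv), (Ex), (Sta) and (Mon) with respect to automorphisms of S(2). -/
namespace Stmt16

open scoped Classical

variable {M : Type*}

/-- The permutation `g` fixes the finite set `A` pointwise. -/
def Fixes (g : Equiv.Perm M) (A : Finset M) : Prop := ∀ a ∈ A, g a = a

/-- The image `g(A)` of a finite set under a permutation. -/
def pimg (g : Equiv.Perm M) (A : Finset M) : Finset M := A.map g.toEmbedding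

/-- `B ≡_A B'` : some automorphism (with respect to the predicate `Auto`) fixes `A`
pointwise and maps `B` onto `B'`. -/
def EquivOver (Auto : Equiv.Perm M → Prop) (A B B' : Finset M) : Prop :=
  ∃ g : Equiv.Perm M, Auto g ∧ Fixes g A ∧ pimg g B = B'

/-- A local SWIR: a ternary relation `Ind` on the nonempty finite subsets of `M`
(`Ind A B C` is read `B ⫫_A C`) satisfying (Inv), (Ex), (Sta) and (Mon) with respect to
the automorphisms of `M` (the permutations satisfying `Auto`). -/
structure IsLocalSWIR (Auto : Equiv.Perm M → Prop)
    (Ind : Finset M → Finset M → Finset M → Prop) : Prop where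
  inv : ∀ A B C : Finset M, A.Nonempty → B.Nonempty → C.Nonempty →
    ∀ g : Equiv.Perm M, Auto g → Ind A B C → Ind (pimg g A) (pimg g B) (pimg g C)
  exLeft : ∀ A B C : Finset M, A.Nonempty → B.Nonempty → C.Nonempty →
    ∃ B' : Finset M, EquivOver Auto A B B' ∧ Ind A B' C
  exRight : ∀ A B C : Finset M, A.Nonempty → B.Nonempty → C.Nonempty →
    ∃ C' : Finset M, EquivOver Auto A C C' ∧ Ind A B C'
  staLeft : ∀ A B B' C : Finset M, A.Nonempty → B.Nonempty → B'.Nonempty → C.Nonempty →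
    Ind A B C → Ind A B' C →
    ∀ g : Equiv.Perm M, Auto g → Fixes g A → pimg g B = B' →
      ∃ h : Equiv.Perm M, Auto h ∧ Fixes h (A ∪ C) ∧ ∀ b ∈ B, h b = g b
  staRight : ∀ A B C C' : Finset M, A.Nonempty → B.Nonempty → C.Nonempty → C'.Nonempty →
    Ind A B C → Ind A B C' →
    ∀ g : Equiv.Perm M, Auto g → Fixes g A → pimg g C = C' →
      ∃ h : Equiv.Perm M, Auto h ∧ Fixes h (A ∪ B) ∧ ∀ c ∈ C, h c = g c
  monLeft : ∀ A B C D : Finset M, A.Nonempty → B.Nonempty → C.Nonempty → D.Nonempty →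
    Ind A (B ∪ D) C → Ind A B C ∧ Ind (A ∪ B) D C
  monRight : ∀ A B C D : Finset M, A.Nonempty → B.Nonempty → C.Nonempty → D.Nonempty →
    Ind A B (C ∪ D) → Ind A B C ∧ Ind (A ∪ C) B D

/-- The vertex set of the dense local order `S(2)`: rational points of the circle,
identified with their arguments as fractions of a full turn. -/
def S2 : Type := {q : ℚ // 0 ≤ q ∧ q < 1}

/-- The tournament relation of `S(2)`: `x → y` iff the fractional part of `y - x` lies
strictly between `0` and `1/2`. -/
def s2rel (x y : S2) : Prop :=
  0 < Int.fract (y.1 - x.1) ∧ Int.fract (y.1 - x.1) < 1/2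

/-- Automorphisms of `S(2)`. -/
def AutoS2 (g : Equiv.Perm S2) : Prop :=
  ∀ a b : S2, s2rel (g a) (g b) ↔ s2rel a b

/-!
Fix a base point `o ∈ A`. Seen from `o`, a point of `S(2)` is a half-turn (`Ahead o`) together
with a reduced argument in `[0, 1/2)` (`harg o`), and `x → y` iff the reduced arguments increase
when the half-turns agree and decrease when they differ. Hence applying an order automorphism of
`[0, 1/2)` to reduced arguments is an automorphism fixing `o`, and by back-and-forth every finite
partial isomorphism fixing `o` extends to an automorphism.

Off `acl A = A ∪ (A + 1/2)`, the types over `A` are cells: a half-turn and an interval between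
consecutive reduced arguments of points of `A`. Declare `B ⫫_A C` when inside every cell the
points of `acl B` lie below those of `acl C`. For existence, compress every cell towards its
bottom so that `B` moves below `C`. For stationarity, if both `B` and `g B` lie below `C` in every
cell, then `g` on `B` glued to the identity on `A ∪ C` is a partial isomorphism, which extends.
Monotonicity is immediate, and the right-hand axioms follow from the left-hand ones through the
anti-automorphism `x ↦ -x`, which exchanges the roles of `B` and `C`.
-/

theorem exists_orderIso_extend_strictMonoOn {α β : Type*} [LinearOrder α] [LinearOrder β]
    [Countable α] [DenselyOrdered α] [NoMinOrder α] [NoMaxOrder α] [Nonempty α]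
    [Countable β] [DenselyOrdered β] [NoMinOrder β] [NoMaxOrder β] [Nonempty β]
    {X : Finset α} {f : α → β} (hf : StrictMonoOn f X) :
    ∃ φ : α ≃o β, ∀ x ∈ X, φ x = f x := by
  cases nonempty_encodable α
  cases nonempty_encodable β
  let p : Order.PartialIso α β := ⟨X.image fun x => (x, f x), by
    simp only [Finset.mem_image]
    rintro _ ⟨x, hx, rfl⟩ _ ⟨y, hy, rfl⟩
    exact (hf.cmp_map_eq hx hy).symm⟩
  let cofinals : α ⊕ β → Order.Cofinal (Order.PartialIso α β) :=
    Sum.elim (Order.PartialIso.definedAtLeft β) (Order.PartialIso.definedAtRight α)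
  let I := Order.idealOfCofinals p cofinals
  let F a := Order.PartialIso.funOfIdeal a I
    (Order.cofinal_meets_idealOfCofinals p cofinals (Sum.inl a))
  let G b := Order.PartialIso.invOfIdeal b I
    (Order.cofinal_meets_idealOfCofinals p cofinals (Sum.inr b))
  have compat : ∀ q ∈ I, ∀ q' ∈ I, ∀ u ∈ q.val, ∀ v ∈ q'.val,
      cmp u.1 v.1 = cmp u.2 v.2 := by
    intro q hq q' hq' u hu v hv
    obtain ⟨m, -, hqm, hq'm⟩ := I.directed _ hq _ hq'
    exact m.prop u (hqm hu) v (hq'm hv)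
  refine ⟨OrderIso.ofCmpEqCmp (fun a => (F a).val) (fun b => (G b).val) fun a b => ?_,
    fun x hx => ?_⟩
  · obtain ⟨q, hq, ha⟩ := (F a).prop
    obtain ⟨q', hq', hb⟩ := (G b).prop
    exact compat q hq q' hq' _ ha _ hb
  · obtain ⟨q, hq, hx'⟩ := (F x).prop
    have hp : (x, f x) ∈ p.val := Finset.mem_image_of_mem _ hx
    show (F x).val = f x
    exact (eq_iff_eq_of_cmp_eq_cmp (compat q hq p (Order.mem_idealOfCofinals p cofinals)
      _ hx' _ hp)).1 rfl

/-- An increasing map of `(l, ∞)` onto `(l, m)`. -/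
def squeeze (l m s : ℚ) : ℚ := l + (m - l) * ((s - l) / (s - l + 1))

lemma squeeze_mem_Ioo {l m s : ℚ} (hs : l < s) (hm : l < m) : squeeze l m s ∈ Set.Ioo l m := by
  have h0 : 0 < (s - l) / (s - l + 1) := div_pos (by linarith) (by linarith)
  have h1 : (s - l) / (s - l + 1) < 1 := (div_lt_one (by linarith)).2 (by linarith)
  constructor <;> unfold squeeze <;> nlinarith

lemma squeeze_strictMonoOn {l m : ℚ} (hm : l < m) : StrictMonoOn (squeeze l m) (Set.Ioi l) := by
  intro s hs s' hs' hss'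
  have hs : l < s := hs
  have hs' : l < s' := hs'
  have key : (s - l) / (s - l + 1) < (s' - l) / (s' - l + 1) := by
    rw [div_lt_div_iff₀ (by linarith) (by linarith)]
    nlinarith
  unfold squeeze
  nlinarith

section PushBelow

variable (R T : Finset ℚ)

/-- The largest point of `R` below `s`; junk value `s` if there is none. -/
noncomputable def cellBottom (s : ℚ) : ℚ :=
  if h : (R.filter (· < s)).Nonempty then (R.filter (· < s)).max' h else s

noncomputable def cellCap (l : ℚ) : ℚ :=
  (insert (l + 1) ((R ∪ T).filter (l < ·))).min' (Finset.insert_nonempty _ _)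

/-- Inside every cell cut out by `R`, move the points strictly below all points of `T`. -/
noncomputable def pushBelow (s : ℚ) : ℚ :=
  if s ∈ R then s else squeeze (cellBottom R s) (cellCap R T (cellBottom R s)) s

variable {R T}

lemma cellBottom_mem_lt {s : ℚ} (h : ∃ r ∈ R, r < s) :
    cellBottom R s ∈ R ∧ cellBottom R s < s := by
  have hne : (R.filter (· < s)).Nonempty := by
    obtain ⟨r, hr, hrs⟩ := h
    exact ⟨r, Finset.mem_filter.2 ⟨hr, hrs⟩⟩
  rw [cellBottom, dif_pos hne]
  exact Finset.mem_filter.1 (Finset.max'_mem _ hne)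

lemma le_cellBottom {r s : ℚ} (hr : r ∈ R) (hrs : r < s) : r ≤ cellBottom R s := by
  have hmem : r ∈ R.filter (· < s) := Finset.mem_filter.2 ⟨hr, hrs⟩
  rw [cellBottom, dif_pos ⟨r, hmem⟩]
  exact Finset.le_max' _ r hmem

lemma lt_cellCap (l : ℚ) : l < cellCap R T l := by
  obtain h | h := Finset.mem_insert.1 (Finset.min'_mem (insert (l + 1) ((R ∪ T).filter (l < ·)))
    (Finset.insert_nonempty _ _))
  · rw [cellCap, h]; linarith
  · exact (Finset.mem_filter.1 h).2

lemma cellCap_le {l t : ℚ} (ht : t ∈ R ∪ T) (hlt : l < t) : cellCap R T l ≤ t :=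
  Finset.min'_le _ t (Finset.mem_insert_of_mem (Finset.mem_filter.2 ⟨ht, hlt⟩))

lemma pushBelow_of_mem {s : ℚ} (hs : s ∈ R) : pushBelow R T s = s :=
  if_pos hs

lemma pushBelow_mem_Ioo {s : ℚ} (hs : s ∉ R) (h : ∃ r ∈ R, r < s) :
    pushBelow R T s ∈ Set.Ioo (cellBottom R s) (cellCap R T (cellBottom R s)) := by
  rw [pushBelow, if_neg hs]
  exact squeeze_mem_Ioo (cellBottom_mem_lt h).2 (lt_cellCap _)

lemma strictMonoOn_pushBelow {S : Finset ℚ} (hS : ∀ s ∈ S, ∃ r ∈ R, r ≤ s) :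
    StrictMonoOn (pushBelow R T) ↑(R ∪ S) := by
  have below : ∀ s ∈ R ∪ S, s ∉ R → ∃ r ∈ R, r < s := by
    intro s hs hsR
    obtain ⟨r, hr, hrs⟩ := hS s ((Finset.mem_union.1 hs).resolve_left hsR)
    exact ⟨r, hr, hrs.lt_of_ne (by rintro rfl; exact hsR hr)⟩
  intro x hx y hy hxy
  by_cases hxR : x ∈ R <;> by_cases hyR : y ∈ R
  · rwa [pushBelow_of_mem hxR, pushBelow_of_mem hyR]
  · rw [pushBelow_of_mem hxR]
    exact (le_cellBottom hxR hxy).trans_lt (pushBelow_mem_Ioo hyR (below y hy hyR)).1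
  · obtain ⟨-, hbx'⟩ := cellBottom_mem_lt (below x hx hxR)
    rw [pushBelow_of_mem hyR]
    exact (pushBelow_mem_Ioo hxR (below x hx hxR)).2.trans_le
      (cellCap_le (Finset.mem_union_left _ hyR) (hbx'.trans hxy))
  · obtain ⟨hbx, hbx'⟩ := cellBottom_mem_lt (below x hx hxR)
    obtain ⟨hby, hby'⟩ := cellBottom_mem_lt (below y hy hyR)
    obtain hlt | heq := (le_cellBottom hbx (hbx'.trans hxy)).lt_or_eq
    · exact ((pushBelow_mem_Ioo hxR (below x hx hxR)).2.trans_le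
        (cellCap_le (Finset.mem_union_left _ hby) hlt)).trans
        (pushBelow_mem_Ioo hyR (below y hy hyR)).1
    · rw [pushBelow, pushBelow, if_neg hxR, if_neg hyR, ← heq]
      exact squeeze_strictMonoOn (lt_cellCap _) hbx' (heq ▸ hby' : cellBottom R x < y) hxy

lemma pushBelow_lt {s t : ℚ} (hs : ∃ r ∈ R, r ≤ s) (ht : t ∈ T) (htR : t ∉ R)
    (hcut : ∀ r ∈ R, s < r ↔ t < r) : pushBelow R T s < t := by
  by_cases hsR : s ∈ R
  · rw [pushBelow_of_mem hsR]
    exact lt_of_le_of_ne (not_lt.1 fun h => lt_irrefl s ((hcut s hsR).2 h))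
      (by rintro rfl; exact htR hsR)
  · obtain ⟨r, hr, hrs⟩ := hs
    have below : ∃ r ∈ R, r < s := ⟨r, hr, hrs.lt_of_ne (by rintro rfl; exact hsR hr)⟩
    obtain ⟨hb, hb'⟩ := cellBottom_mem_lt below
    have hbt : cellBottom R s < t := by
      by_contra h
      have htb : t < cellBottom R s := lt_of_le_of_ne (not_lt.1 h) (by rintro rfl; exact htR hb)
      exact lt_asymm hb' ((hcut _ hb).2 htb)
    exact (pushBelow_mem_Ioo hsR below).2.trans_le (cellCap_le (Finset.mem_union_right _ ht) hbt)

theorem exists_orderIso_pushBelow (R S T : Finset ℚ) (hS : ∀ s ∈ S, ∃ r ∈ R, r ≤ s) :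
    ∃ φ : ℚ ≃o ℚ, (∀ r ∈ R, φ r = r) ∧
      ∀ s ∈ S, ∀ t ∈ T, t ∉ R → (∀ r ∈ R, s < r ↔ t < r) → φ s < t := by
  obtain ⟨φ, hφ⟩ := exists_orderIso_extend_strictMonoOn (strictMonoOn_pushBelow (T := T) hS)
  refine ⟨φ, fun r hr => ?_, fun s hs t ht htR hcut => ?_⟩
  · rw [hφ r (Finset.mem_union_left _ hr), pushBelow_of_mem hr]
  · rw [hφ s (Finset.mem_union_right _ hs)]
    exact pushBelow_lt (hS s hs) ht htR hcut

end PushBelow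

def mk (q : ℚ) : S2 := ⟨Int.fract q, Int.fract_nonneg q, Int.fract_lt_one q⟩

lemma mk_val (x : S2) : mk x.1 = x := Subtype.ext (Int.fract_eq_self.2 x.2)

lemma mk_add_intCast (q : ℚ) (z : ℤ) : mk (q + z) = mk q :=
  Subtype.ext (Int.fract_add_intCast q z)

def antipode (x : S2) : S2 := mk (x.1 + 1/2)

lemma antipode_mk (q : ℚ) : antipode (mk q) = mk (q + 1/2) := by
  show mk (Int.fract q + 1/2) = _
  rw [Int.fract, show q - ⌊q⌋ + 1/2 = q + 1/2 + ((-⌊q⌋ : ℤ) : ℚ) by push_cast; ring,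
    mk_add_intCast]

lemma fract_fract_sub (q q' : ℚ) : Int.fract (Int.fract q - q') = Int.fract (q - q') :=
  Int.fract_eq_fract.2 ⟨-⌊q⌋, by rw [Int.fract]; push_cast; ring⟩

lemma fract_of_neg {d : ℚ} (h1 : -1 ≤ d) (h2 : d < 0) : Int.fract d = d + 1 :=
  Int.fract_eq_iff.2 ⟨by linarith, by linarith, -1, by push_cast; ring⟩

lemma fract_pos_lt_half_iff {d : ℚ} (h1 : -1/2 < d) (h2 : d < 1/2) :
    0 < Int.fract d ∧ Int.fract d < 1/2 ↔ 0 < d := by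
  rcases le_or_gt 0 d with hd | hd
  · rw [Int.fract_eq_self.2 ⟨hd, by linarith⟩]
    exact ⟨And.left, fun h => ⟨h, h2⟩⟩
  · rw [fract_of_neg (by linarith) hd]
    exact ⟨fun h => by linarith [h.2], fun h => by linarith⟩

lemma fract_add_half_pos_lt_half_iff {d : ℚ} (h1 : -1/2 < d) (h2 : d < 1/2) :
    0 < Int.fract (d + 1/2) ∧ Int.fract (d + 1/2) < 1/2 ↔ d < 0 := by
  rcases lt_or_ge d 0 with hd | hd
  · rw [Int.fract_eq_self.2 ⟨by linarith, by linarith⟩]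
    exact ⟨fun _ => hd, fun _ => ⟨by linarith, by linarith⟩⟩
  · rw [Int.fract_eq_self.2 ⟨by linarith, by linarith⟩]
    exact ⟨fun h => by linarith [h.2], fun h => by linarith⟩

section Coordinates

variable (o : S2)

def arg (x : S2) : ℚ := Int.fract (x.1 - o.1)

def Ahead (x : S2) : Prop := arg o x < 1/2

noncomputable def harg (x : S2) : ℚ := if Ahead o x then arg o x else arg o x - 1/2

noncomputable def ofCoords (s : Prop) (r : ℚ) : S2 := mk (o.1 + r + if s then 0 else 1/2)

variable {o}

lemma arg_mk (q : ℚ) : arg o (mk q) = Int.fract (q - o.1) := fract_fract_sub q o.1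

lemma arg_eq_harg_add (x : S2) : arg o x = harg o x + if Ahead o x then 0 else 1/2 := by
  unfold harg; split_ifs <;> ring

lemma harg_nonneg (o x : S2) : 0 ≤ harg o x := by
  have := Int.fract_nonneg (x.1 - o.1)
  unfold harg Ahead arg; split_ifs with h <;> linarith

lemma harg_lt_half (o x : S2) : harg o x < 1/2 := by
  have := Int.fract_lt_one (x.1 - o.1)
  unfold harg Ahead arg; split_ifs with h <;> linarith

section
variable {s : Prop} {r : ℚ} (h0 : 0 ≤ r) (h1 : r < 1/2)
include h0 h1

lemma arg_ofCoords : arg o (ofCoords o s r) = r + if s then 0 else 1/2 := by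
  rw [ofCoords, arg_mk, add_assoc, add_sub_cancel_left, Int.fract_eq_self]
  split_ifs <;> constructor <;> linarith

lemma ahead_ofCoords : Ahead o (ofCoords o s r) ↔ s := by
  unfold Ahead; rw [arg_ofCoords h0 h1]
  by_cases hs : s <;> simp only [hs, if_true, if_false, iff_true, iff_false] <;> linarith

lemma harg_ofCoords : harg o (ofCoords o s r) = r := by
  rw [harg, if_congr (ahead_ofCoords h0 h1) rfl rfl, arg_ofCoords h0 h1]
  by_cases hs : s <;> simp [hs]

end

lemma ofCoords_ahead_harg (x : S2) : ofCoords o (Ahead o x) (harg o x) = x := by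
  rw [ofCoords, add_assoc, ← arg_eq_harg_add, arg, Int.fract,
    show o.1 + (x.1 - o.1 - ⌊x.1 - o.1⌋) = x.1 + ((-⌊x.1 - o.1⌋ : ℤ) : ℚ) by push_cast; ring,
    mk_add_intCast, mk_val]

lemma eq_of_ahead_harg {x y : S2} (hA : Ahead o x ↔ Ahead o y) (hr : harg o x = harg o y) :
    x = y := by
  rw [← ofCoords_ahead_harg x, ← ofCoords_ahead_harg y, propext hA, hr]

lemma antipode_ofCoords (s : Prop) (r : ℚ) : antipode (ofCoords o s r) = ofCoords o (¬ s) r := by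
  rw [ofCoords, ofCoords, antipode_mk]
  by_cases hs : s
  · simp only [hs, if_true, not_true_eq_false, if_false]; congr 1; ring
  · simp only [hs, if_false, not_false_eq_true, if_true]
    rw [← mk_add_intCast (o.1 + r + 0) 1]; congr 1; push_cast; ring

lemma antipode_eq_ofCoords (x : S2) : antipode x = ofCoords o (¬ Ahead o x) (harg o x) := by
  conv_lhs => rw [← ofCoords_ahead_harg (o := o) x]
  exact antipode_ofCoords _ _

lemma ahead_antipode (x : S2) : Ahead o (antipode x) ↔ ¬ Ahead o x := by
  rw [antipode_eq_ofCoords, ahead_ofCoords (harg_nonneg o x) (harg_lt_half o x)]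

lemma harg_antipode (x : S2) : harg o (antipode x) = harg o x := by
  rw [antipode_eq_ofCoords, harg_ofCoords (harg_nonneg o x) (harg_lt_half o x)]

lemma s2rel_ofCoords {s s' : Prop} {r r' : ℚ} (h0 : 0 ≤ r) (h1 : r < 1/2) (h0' : 0 ≤ r')
    (h1' : r' < 1/2) : s2rel (ofCoords o s r) (ofCoords o s' r') ↔
      ((s ↔ s') ∧ r < r') ∨ (¬(s ↔ s') ∧ r' < r) := by
  have key : Int.fract ((ofCoords o s' r').1 - (ofCoords o s r).1) =
      Int.fract (r' - r + ((if s' then 0 else 1/2) - (if s then 0 else 1/2))) := by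
    rw [Int.fract_eq_fract]
    refine ⟨⌊o.1 + r + (if s then 0 else 1/2)⌋ - ⌊o.1 + r' + (if s' then 0 else 1/2)⌋, ?_⟩
    simp only [ofCoords, mk, Int.fract]
    push_cast; ring
  have hd1 : -1/2 < r' - r := by linarith
  have hd2 : r' - r < 1/2 := by linarith
  unfold s2rel
  rw [key]
  by_cases hs : s <;> by_cases hs' : s' <;> simp only [hs, hs', if_true, if_false]
  · simp only [sub_self, add_zero, true_and, not_true_eq_false, false_and, or_false]
    rw [fract_pos_lt_half_iff hd1 hd2, sub_pos]
  · rw [sub_zero, fract_add_half_pos_lt_half_iff hd1 hd2, sub_neg]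
    simp
  · rw [show r' - r + (0 - 1/2) = r' - r + 1/2 + ((-1 : ℤ) : ℚ) by push_cast; ring,
      Int.fract_add_intCast, fract_add_half_pos_lt_half_iff hd1 hd2, sub_neg]
    simp
  · simp only [sub_self, add_zero, true_and, not_true_eq_false, false_and, or_false]
    rw [fract_pos_lt_half_iff hd1 hd2, sub_pos]

lemma s2rel_iff_coords (o x y : S2) : s2rel x y ↔
    ((Ahead o x ↔ Ahead o y) ∧ harg o x < harg o y) ∨
      (¬(Ahead o x ↔ Ahead o y) ∧ harg o y < harg o x) := by
  have h := s2rel_ofCoords (o := o) (s := Ahead o x) (s' := Ahead o y) (harg_nonneg o x)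
    (harg_lt_half o x) (harg_nonneg o y) (harg_lt_half o y)
  rwa [ofCoords_ahead_harg, ofCoords_ahead_harg] at h

end Coordinates

section Tournament

variable {o x y : S2}

lemma ahead_self (o : S2) : Ahead o o := by
  simp [Ahead, arg]

lemma harg_self (o : S2) : harg o o = 0 := by
  simp [harg, ahead_self, arg]

lemma harg_eq_harg_iff : harg o x = harg o y ↔ y = x ∨ y = antipode x := by
  refine ⟨fun h => ?_, ?_⟩
  · by_cases hA : Ahead o x ↔ Ahead o y
    · exact Or.inl (eq_of_ahead_harg hA h).symm
    · refine Or.inr (eq_of_ahead_harg ?_ (h.symm.trans (harg_antipode x).symm))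
      rw [ahead_antipode]; tauto
  · rintro (rfl | rfl)
    · rfl
    · exact (harg_antipode x).symm

lemma s2rel_base_left : s2rel o x ↔ Ahead o x ∧ 0 < harg o x := by
  have := harg_nonneg o x
  rw [s2rel_iff_coords o, harg_self]
  simp only [ahead_self, true_iff]
  constructor
  · rintro (h | ⟨-, h⟩) <;> [exact h; linarith]
  · exact Or.inl

lemma s2rel_base_right : s2rel x o ↔ ¬ Ahead o x ∧ 0 < harg o x := by
  have := harg_nonneg o x
  rw [s2rel_iff_coords o, harg_self]
  simp only [ahead_self, iff_true]
  constructor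
  · rintro (⟨-, h⟩ | h) <;> [linarith; exact h]
  · exact Or.inr

lemma unrelated_iff : ¬ s2rel x y ∧ ¬ s2rel y x ↔ y = x ∨ y = antipode x := by
  rw [s2rel_base_left, s2rel_base_right, ← harg_eq_harg_iff (o := x), harg_self]
  have := harg_nonneg x y
  constructor
  · rintro ⟨h1, h2⟩
    by_contra h
    by_cases hA : Ahead x y
    · exact h1 ⟨hA, lt_of_le_of_ne this h⟩
    · exact h2 ⟨hA, lt_of_le_of_ne this h⟩
  · intro h
    rw [← h]
    exact ⟨fun h' => lt_irrefl _ h'.2, fun h' => lt_irrefl _ h'.2⟩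

lemma s2rel_asymm (h : s2rel x y) : ¬ s2rel y x := by
  rw [s2rel_base_left (o := x)] at h
  rw [s2rel_base_right (o := x)]
  exact fun h' => h'.1 h.1

lemma s2rel_irrefl (x : S2) : ¬ s2rel x x := fun h => s2rel_asymm h h

lemma s2rel_antipode_right : s2rel x (antipode y) ↔ s2rel y x := by
  rw [s2rel_iff_coords x, s2rel_iff_coords x, ahead_antipode, harg_antipode]
  by_cases hx : Ahead x x <;> by_cases hy : Ahead x y <;> simp [hx, hy]

lemma antipode_antipode (x : S2) : antipode (antipode x) = x := by
  show antipode (mk (x.1 + 1/2)) = x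
  rw [antipode_mk, add_assoc, show (1/2 + 1/2 : ℚ) = ((1 : ℤ) : ℚ) by norm_num,
    mk_add_intCast, mk_val]

lemma antipode_ne (x : S2) : antipode x ≠ x := fun h => by
  simpa [h] using ahead_antipode (o := x) x

end Tournament

lemma ahead_iff {o x : S2} : Ahead o x ↔ x = o ∨ s2rel o x := by
  rw [s2rel_base_left]
  refine ⟨fun h => ?_, ?_⟩
  · rcases (harg_nonneg o x).lt_or_eq with hpos | hzero
    · exact Or.inr ⟨h, hpos⟩
    · rcases harg_eq_harg_iff.1 ((harg_self o).trans hzero) with rfl | rfl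
      · exact Or.inl rfl
      · exact absurd ((ahead_antipode o).1 h) (not_not.2 (ahead_self o))
  · rintro (rfl | h)
    · exact ahead_self x
    · exact h.1

lemma harg_lt_harg_iff (o x y : S2) : harg o x < harg o y ↔
    ((Ahead o x ↔ Ahead o y) ∧ s2rel x y) ∨ (¬(Ahead o x ↔ Ahead o y) ∧ s2rel y x) := by
  rw [s2rel_iff_coords o x y, s2rel_iff_coords o y x]
  by_cases hx : Ahead o x <;> by_cases hy : Ahead o y <;> simp [hx, hy]

section Automorphisms

variable {g : Equiv.Perm S2}

lemma AutoS2.symm (hg : AutoS2 g) : AutoS2 g.symm := fun a b => by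
  rw [← hg, Equiv.apply_symm_apply, Equiv.apply_symm_apply]

lemma AutoS2.map_antipode (hg : AutoS2 g) (x : S2) : g (antipode x) = antipode (g x) := by
  have h : ¬ s2rel (g x) (g (antipode x)) ∧ ¬ s2rel (g (antipode x)) (g x) := by
    rw [hg, hg]; exact unrelated_iff.2 (Or.inr rfl)
  exact (unrelated_iff.1 h).resolve_left fun h' => antipode_ne x (g.injective h')

end Automorphisms

lemma apply_mem_pimg {g : Equiv.Perm M} {A : Finset M} {x : M} : g x ∈ pimg g A ↔ x ∈ A :=
  Finset.mem_map' g.toEmbedding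

lemma pimg_mul (g h : Equiv.Perm M) (A : Finset M) : pimg (g * h) A = pimg g (pimg h A) := by
  ext x; simp only [pimg, Finset.mem_map_equiv, Equiv.Perm.mul_def, Equiv.symm_trans_apply]

noncomputable def mapCoords (o : S2) (f : ℚ → ℚ) (x : S2) : S2 :=
  ofCoords o (Ahead o x) (f (harg o x))

section MapCoords

variable {o : S2} {φ : ℚ ≃o ℚ} (h0 : φ 0 = 0) (hh : φ (1/2) = 1/2)
include h0 hh

lemma orderIso_mem_Ico {r : ℚ} (hr : r ∈ Set.Ico 0 (1/2)) : φ r ∈ Set.Ico 0 (1/2) :=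
  ⟨h0 ▸ φ.monotone hr.1, hh ▸ φ.strictMono hr.2⟩

lemma ahead_mapCoords (x : S2) : Ahead o (mapCoords o φ x) ↔ Ahead o x :=
  have h := orderIso_mem_Ico h0 hh ⟨harg_nonneg o x, harg_lt_half o x⟩
  ahead_ofCoords h.1 h.2

lemma harg_mapCoords (x : S2) : harg o (mapCoords o φ x) = φ (harg o x) :=
  have h := orderIso_mem_Ico h0 hh ⟨harg_nonneg o x, harg_lt_half o x⟩
  harg_ofCoords h.1 h.2

lemma mapCoords_symm_mapCoords (x : S2) : mapCoords o φ.symm (mapCoords o φ x) = x := by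
  rw [mapCoords, ahead_mapCoords h0 hh, harg_mapCoords h0 hh, φ.symm_apply_apply,
    ofCoords_ahead_harg]

lemma s2rel_mapCoords (x y : S2) : s2rel (mapCoords o φ x) (mapCoords o φ y) ↔ s2rel x y := by
  rw [s2rel_iff_coords o, s2rel_iff_coords o x, ahead_mapCoords h0 hh, ahead_mapCoords h0 hh,
    harg_mapCoords h0 hh, harg_mapCoords h0 hh, φ.lt_iff_lt, φ.lt_iff_lt]

end MapCoords

theorem exists_autoS2_of_orderIso (o : S2) {φ : ℚ ≃o ℚ} (h0 : φ 0 = 0) (hh : φ (1/2) = 1/2) :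
    ∃ g : Equiv.Perm S2, AutoS2 g ∧
      ∀ x, (Ahead o (g x) ↔ Ahead o x) ∧ harg o (g x) = φ (harg o x) := by
  have h0' : φ.symm 0 = 0 := φ.symm_apply_eq.2 h0.symm
  have hh' : φ.symm (1/2) = 1/2 := φ.symm_apply_eq.2 hh.symm
  refine ⟨⟨mapCoords o φ, mapCoords o φ.symm, mapCoords_symm_mapCoords h0 hh, fun x => ?_⟩,
    s2rel_mapCoords h0 hh, fun x => ⟨ahead_mapCoords h0 hh x, harg_mapCoords h0 hh x⟩⟩
  simpa using mapCoords_symm_mapCoords h0' hh' x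

theorem exists_autoS2_extend_of_coords {o : S2} {E : Finset S2} (ho : o ∈ E) {p : S2 → S2}
    (hpo : p o = o) (hA : ∀ x ∈ E, Ahead o (p x) ↔ Ahead o x)
    (hlt : ∀ x ∈ E, ∀ y ∈ E, harg o (p x) < harg o (p y) ↔ harg o x < harg o y) :
    ∃ g : Equiv.Perm S2, AutoS2 g ∧ ∀ x ∈ E, g x = p x := by
  have heq : ∀ x ∈ E, ∀ y ∈ E, harg o x = harg o y → harg o (p x) = harg o (p y) :=
    fun x hx y hy h => le_antisymm (not_lt.1 fun h' => h.not_gt ((hlt y hy x hx).1 h'))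
      (not_lt.1 fun h' => h.not_lt ((hlt x hx y hy).1 h'))
  let f : ℚ → ℚ := fun q => if h : ∃ x ∈ E, harg o x = q then harg o (p h.choose) else q
  have hf : ∀ x ∈ E, f (harg o x) = harg o (p x) := by
    intro x hx
    have h : ∃ y ∈ E, harg o y = harg o x := ⟨x, hx, rfl⟩
    simp only [f, dif_pos h]
    exact heq _ h.choose_spec.1 x hx h.choose_spec.2
  have hf_half : f (1/2) = 1/2 := by
    simp only [f, dite_eq_right_iff]
    rintro ⟨x, -, hx⟩
    exact absurd hx (harg_lt_half o x).ne
  have hmono : StrictMonoOn f ↑(insert (1/2) (E.image (harg o))) := by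
    simp only [Finset.coe_insert, Finset.coe_image]
    rintro _ (rfl | ⟨x, hx, rfl⟩) _ (rfl | ⟨y, hy, rfl⟩) hlt'
    · exact absurd hlt' (lt_irrefl _)
    · exact absurd hlt' (harg_lt_half o y).not_gt
    · rw [hf x hx, hf_half]; exact harg_lt_half o (p x)
    · rw [hf x hx, hf y hy]; exact (hlt x hx y hy).2 hlt'
  obtain ⟨φ, hφ⟩ := exists_orderIso_extend_strictMonoOn hmono
  have hφ0 : φ 0 = 0 := by
    rw [← harg_self o, hφ _ (Finset.mem_insert_of_mem (Finset.mem_image_of_mem _ ho)),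
      hf o ho, hpo]
  have hφh : φ (1/2) = 1/2 := by rw [hφ _ (Finset.mem_insert_self _ _), hf_half]
  obtain ⟨g, hg, hgc⟩ := exists_autoS2_of_orderIso o hφ0 hφh
  refine ⟨g, hg, fun x hx => eq_of_ahead_harg ((hgc x).1.trans (hA x hx).symm) ?_⟩
  rw [(hgc x).2, hφ _ (Finset.mem_insert_of_mem (Finset.mem_image_of_mem _ hx)), hf x hx]

theorem exists_autoS2_extend {o : S2} {E : Finset S2} (ho : o ∈ E) {p : S2 → S2}
    (hpo : p o = o) (hinj : Set.InjOn p E)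
    (hrel : ∀ x ∈ E, ∀ y ∈ E, s2rel (p x) (p y) ↔ s2rel x y) :
    ∃ g : Equiv.Perm S2, AutoS2 g ∧ ∀ x ∈ E, g x = p x := by
  have hA : ∀ x ∈ E, Ahead o (p x) ↔ Ahead o x := by
    intro x hx
    calc Ahead o (p x) ↔ p x = p o ∨ s2rel (p o) (p x) := by rw [ahead_iff, hpo]
      _ ↔ Ahead o x := by rw [hinj.eq_iff hx ho, hrel o ho x hx, ahead_iff]
  refine exists_autoS2_extend_of_coords ho hpo hA fun x hx y hy => ?_
  rw [harg_lt_harg_iff, harg_lt_harg_iff, hA x hx, hA y hy, hrel x hx y hy, hrel y hy x hx]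

/-- The algebraic closure of `A`: the points unrelated to some point of `A`. -/
def acl (A : Finset S2) : Set S2 := {x | x ∈ A ∨ antipode x ∈ A}

def SameType (A : Finset S2) (x y : S2) : Prop :=
  ∀ a ∈ A, (s2rel x a ↔ s2rel y a) ∧ (s2rel a x ↔ s2rel a y)

/-- `B ⫫_A C`: away from `acl A`, each point of `acl B` points to each point of `acl C` of the
same type over `A`. -/
def Indep (A B C : Finset S2) : Prop :=
  ∀ b ∈ acl B, ∀ c ∈ acl C, b ∉ acl A → c ∉ acl A → SameType A b c → s2rel b c

section Acl

variable {A C : Finset S2} {x : S2}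

lemma mem_acl_of_mem (hx : x ∈ A) : x ∈ acl A := Or.inl hx

lemma acl_mono {A' : Finset S2} (h : A ⊆ A') (hx : x ∈ acl A) : x ∈ acl A' :=
  hx.imp (@h _) (@h _)

lemma antipode_mem_acl : antipode x ∈ acl A ↔ x ∈ acl A := by
  simp only [acl, Set.mem_ofPred_eq, antipode_antipode, or_comm]

lemma mem_acl_union : x ∈ acl (A ∪ C) ↔ x ∈ acl A ∨ x ∈ acl C := by
  simp only [acl, Set.mem_ofPred_eq, Finset.mem_union]; tauto

lemma mem_acl_iff_harg (o : S2) : x ∈ acl A ↔ ∃ a ∈ A, harg o a = harg o x := by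
  refine ⟨?_, fun ⟨a, ha, h⟩ => ?_⟩
  · rintro (hx | hx)
    · exact ⟨x, hx, rfl⟩
    · exact ⟨_, hx, harg_antipode x⟩
  · rcases harg_eq_harg_iff.1 h with rfl | rfl
    · exact Or.inl ha
    · exact Or.inr (by rwa [antipode_antipode])

lemma mem_acl_pimg {g : Equiv.Perm S2} (hg : ∀ y, g (antipode y) = antipode (g y)) :
    x ∈ acl (pimg g A) ↔ g.symm x ∈ acl A := by
  have hg' : antipode (g.symm x) = g.symm (antipode x) := by
    rw [g.eq_symm_apply, hg, Equiv.apply_symm_apply]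
  simp only [acl, pimg, Set.mem_ofPred_eq, Finset.mem_map_equiv, hg']

end Acl

section SameType

variable {A : Finset S2} {o x y : S2}

lemma SameType.refl (A : Finset S2) (x : S2) : SameType A x x := fun _ _ => ⟨Iff.rfl, Iff.rfl⟩

lemma SameType.symm (h : SameType A x y) : SameType A y x :=
  fun a ha => ⟨(h a ha).1.symm, (h a ha).2.symm⟩

lemma SameType.trans {z : S2} (h : SameType A x y) (h' : SameType A y z) : SameType A x z :=
  fun a ha => ⟨(h a ha).1.trans (h' a ha).1, (h a ha).2.trans (h' a ha).2⟩

lemma SameType.mono {A' : Finset S2} (hAA' : A ⊆ A') (h : SameType A' x y) : SameType A x y :=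
  fun a ha => h a (hAA' ha)

lemma s2rel_iff_of_harg_ne (h : harg o x ≠ harg o y) :
    s2rel x y ↔ ((Ahead o x ↔ Ahead o y) ↔ harg o x < harg o y) := by
  rw [s2rel_iff_coords o]
  rcases h.lt_or_gt with h' | h'
  · simp only [h', not_lt_of_gt h', and_true, and_false, or_false, iff_true]
  · simp only [h', not_lt_of_gt h', and_true, and_false, false_or, iff_false]

lemma sameType_iff_coords (ho : o ∈ A) (hx : x ∉ acl A) (hy : y ∉ acl A) :
    SameType A x y ↔
      (Ahead o x ↔ Ahead o y) ∧ ∀ a ∈ A, (harg o x < harg o a ↔ harg o y < harg o a) := by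
  have key : ∀ z ∉ acl A, ∀ a ∈ A,
      (s2rel z a ↔ ((Ahead o z ↔ Ahead o a) ↔ harg o z < harg o a)) ∧
      (s2rel a z ↔ ¬ ((Ahead o z ↔ Ahead o a) ↔ harg o z < harg o a)) := by
    intro z hz a ha
    have hne : harg o z ≠ harg o a := fun h => hz ((mem_acl_iff_harg o).2 ⟨a, ha, h.symm⟩)
    have hlt : harg o a < harg o z ↔ ¬ harg o z < harg o a :=
      ⟨not_lt_of_gt, fun h => lt_of_le_of_ne (not_lt.1 h) hne.symm⟩
    rw [s2rel_iff_of_harg_ne hne, s2rel_iff_of_harg_ne hne.symm, hlt]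
    tauto
  constructor
  · intro h
    have hside : Ahead o x ↔ Ahead o y := by
      have h' := (h o ho).1
      rw [(key x hx o ho).1, (key y hy o ho).1, harg_self] at h'
      simpa [ahead_self, not_lt.2 (harg_nonneg o x), not_lt.2 (harg_nonneg o y),
        not_iff_not] using h'
    refine ⟨hside, fun a ha => ?_⟩
    have h' := (h a ha).1
    rw [(key x hx a ha).1, (key y hy a ha).1] at h'
    tauto
  · rintro ⟨hside, hcut⟩ a ha
    rw [(key x hx a ha).1, (key y hy a ha).1, (key x hx a ha).2, (key y hy a ha).2, hside,
      hcut a ha]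
    exact ⟨Iff.rfl, Iff.rfl⟩

end SameType

section Automorphisms

variable {g : Equiv.Perm S2} {A : Finset S2} {x y : S2}

lemma AutoS2.sameType_pimg (hg : AutoS2 g) :
    SameType (pimg g A) x y ↔ SameType A (g.symm x) (g.symm y) := by
  simp only [SameType, pimg, Finset.forall_mem_map, Equiv.coe_toEmbedding]
  refine forall₂_congr fun a _ => ?_
  rw [← hg.symm x, ← hg.symm y, ← hg.symm (g a), ← hg.symm (g a), Equiv.symm_apply_apply]

lemma AutoS2.apply_eq_of_mem_acl (hg : AutoS2 g) (hgA : Fixes g A) (hx : x ∈ acl A) :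
    g x = x := by
  rcases hx with hx | hx
  · exact hgA x hx
  · rw [← antipode_antipode x, hg.map_antipode, hgA _ hx]

lemma AutoS2.apply_mem_acl_iff (hg : AutoS2 g) (hgA : Fixes g A) : g x ∈ acl A ↔ x ∈ acl A := by
  refine ⟨fun h => ?_, fun h => by rwa [hg.apply_eq_of_mem_acl hgA h]⟩
  have hgA' : Fixes g.symm A := fun a ha => g.symm_apply_eq.2 (hgA a ha).symm
  rwa [← g.symm_apply_apply x, hg.symm.apply_eq_of_mem_acl hgA' h]

lemma AutoS2.sameType_apply (hg : AutoS2 g) (hgA : Fixes g A) (x : S2) : SameType A (g x) x :=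
  fun a ha => ⟨by simpa only [hgA a ha] using hg x a, by simpa only [hgA a ha] using hg a x⟩

end Automorphisms

lemma lt_iff_lt_of_cut {α : Type*} [LinearOrder α] {a x x' y : α} (hx'a : x' ≠ a) (hya : y ≠ a)
    (hcut : x < a ↔ x' < a) (hsep : ¬ (x < a ↔ y < a)) : x < y ↔ x' < y := by
  by_cases hxa : x < a
  · have hay : a < y := lt_of_le_of_ne (not_lt.1 fun h => hsep (iff_of_true hxa h)) hya.symm
    exact iff_of_true (hxa.trans hay) ((hcut.1 hxa).trans hay)
  · have hya' : y < a := by_contra fun h => hsep (iff_of_false hxa h)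
    have hax' : a < x' := lt_of_le_of_ne (not_lt.1 (hcut.not.1 hxa)) hx'a.symm
    exact iff_of_false (fun h => hxa (h.trans hya')) (fun h => (hax'.trans h).not_gt hya')

lemma s2rel_congr_of_sameType {A : Finset S2} {o x x' y : S2} (ho : o ∈ A) (hx : x ∉ acl A)
    (hx' : x' ∉ acl A) (hy : y ∉ acl A) (hxx' : SameType A x x') (h1 : ¬ SameType A x y)
    (h2 : ¬ SameType A x (antipode y)) : s2rel x y ↔ s2rel x' y := by
  obtain ⟨hside, hcut⟩ := (sameType_iff_coords ho hx hx').1 hxx'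
  have hsep : ∃ a ∈ A, ¬ (harg o x < harg o a ↔ harg o y < harg o a) := by
    by_contra! hno
    by_cases hs : Ahead o x ↔ Ahead o y
    · exact h1 ((sameType_iff_coords ho hx hy).2 ⟨hs, hno⟩)
    · refine h2 ((sameType_iff_coords ho hx (antipode_mem_acl.not.2 hy)).2 ⟨?_, ?_⟩)
      · rw [ahead_antipode]; tauto
      · simpa only [harg_antipode] using hno
  obtain ⟨a, ha, hsepa⟩ := hsep
  have hne : ∀ z ∉ acl A, harg o z ≠ harg o a :=
    fun z hz h => hz ((mem_acl_iff_harg o).2 ⟨a, ha, h.symm⟩)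
  have hxy : harg o x ≠ harg o y := fun h => hsepa (by rw [h])
  have hx'y : harg o x' ≠ harg o y := fun h => hsepa (by rw [hcut a ha, h])
  rw [s2rel_iff_of_harg_ne hxy, s2rel_iff_of_harg_ne hx'y, hside,
    lt_iff_lt_of_cut (hne x' hx') (hne y hy) (hcut a ha) hsepa]

section Indep

variable {A B C : Finset S2}

lemma Indep.mono_left {B' : Finset S2} (hB : B' ⊆ B) (h : Indep A B C) : Indep A B' C :=
  fun b hb => h b (acl_mono hB hb)

lemma Indep.mono_right {C' : Finset S2} (hC : C' ⊆ C) (h : Indep A B C) : Indep A B C' :=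
  fun b hb c hc => h b hb c (acl_mono hC hc)

lemma Indep.mono_base {A' : Finset S2} (hA : A ⊆ A') (h : Indep A B C) : Indep A' B C :=
  fun b hb c hc hbA hcA hbc =>
    h b hb c hc (fun h' => hbA (acl_mono hA h')) (fun h' => hcA (acl_mono hA h')) (hbc.mono hA)

lemma Indep.mem_acl {x : S2} (h : Indep A B C) (hB : x ∈ acl B) (hC : x ∈ acl C) :
    x ∈ acl A :=
  by_contra fun hx => s2rel_irrefl x (h x hB x hC hx hx (SameType.refl A x))

lemma Indep.map {g : Equiv.Perm S2} (hg : AutoS2 g) (h : Indep A B C) :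
    Indep (pimg g A) (pimg g B) (pimg g C) := by
  intro b hb c hc hbA hcA hbc
  rw [mem_acl_pimg hg.map_antipode] at hb hc hbA hcA
  rw [hg.sameType_pimg] at hbc
  rw [← hg.symm]
  exact h _ hb _ hc hbA hcA hbc

lemma indep_of_harg_lt {o : S2} (ho : o ∈ A)
    (h : ∀ x ∈ acl B, ∀ y ∈ acl C, x ∉ acl A → y ∉ acl A →
      (∀ a ∈ A, harg o x < harg o a ↔ harg o y < harg o a) → harg o x < harg o y) :
    Indep A B C := by
  intro b hb c hc hbA hcA hbc
  obtain ⟨hside, hcut⟩ := (sameType_iff_coords ho hbA hcA).1 hbc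
  exact (s2rel_iff_coords o b c).2 (Or.inl ⟨hside, h b hb c hc hbA hcA hcut⟩)

lemma Indep.s2rel_apply_iff {B' : Finset S2} {g : Equiv.Perm S2} {o b y : S2} (ho : o ∈ A)
    (hBC : Indep A B C) (hB'C : Indep A B' C) (hg : AutoS2 g) (hgA : Fixes g A)
    (hb : b ∈ acl B) (hgb : g b ∈ acl B') (hy : y ∈ acl A ∨ y ∈ acl C) :
    s2rel (g b) y ↔ s2rel b y := by
  by_cases hyA : y ∈ acl A
  · conv_lhs => rw [← hg.apply_eq_of_mem_acl hgA hyA]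
    exact hg b y
  have hyC := hy.resolve_left hyA
  by_cases hbA : b ∈ acl A
  · rw [hg.apply_eq_of_mem_acl hgA hbA]
  have hgbA : g b ∉ acl A := (hg.apply_mem_acl_iff hgA).not.2 hbA
  have hgbb : SameType A (g b) b := hg.sameType_apply hgA b
  by_cases h1 : SameType A b y
  · exact iff_of_true (hB'C _ hgb y hyC hgbA hyA (hgbb.trans h1)) (hBC b hb y hyC hbA hyA h1)
  by_cases h2 : SameType A b (antipode y)
  · have hyC' := antipode_mem_acl.2 hyC
    have hyA' := antipode_mem_acl.not.2 hyA
    have e1 := hBC b hb _ hyC' hbA hyA' h2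
    have e2 := hB'C _ hgb _ hyC' hgbA hyA' (hgbb.trans h2)
    rw [s2rel_antipode_right] at e1 e2
    exact iff_of_false (s2rel_asymm e2) (s2rel_asymm e1)
  exact (s2rel_congr_of_sameType ho hbA hgbA hyA hgbb.symm h1 h2).symm

end Indep

theorem exists_indep_left {A : Finset S2} (hA : A.Nonempty) (B C : Finset S2) :
    ∃ B', EquivOver AutoS2 A B B' ∧ Indep A B' C := by
  obtain ⟨o, ho⟩ := hA
  set R := insert (1/2 : ℚ) (A.image (harg o))
  have hR : ∀ a ∈ A, harg o a ∈ R := fun a ha =>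
    Finset.mem_insert_of_mem (Finset.mem_image_of_mem _ ha)
  have h0R : (0 : ℚ) ∈ R := harg_self o ▸ hR o ho
  obtain ⟨φ, hφR, hφ⟩ := exists_orderIso_pushBelow R (B.image (harg o)) (C.image (harg o))
    (by simpa using fun b _ => ⟨0, h0R, harg_nonneg o b⟩)
  obtain ⟨g, hg, hgc⟩ :=
    exists_autoS2_of_orderIso o (hφR 0 h0R) (hφR _ (Finset.mem_insert_self _ _))
  have hgA : Fixes g A := fun a ha =>
    eq_of_ahead_harg (hgc a).1 ((hgc a).2.trans (hφR _ (hR a ha)))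
  refine ⟨pimg g B, ⟨g, hg, hgA, rfl⟩, indep_of_harg_lt ho fun x hx y hy hxA hyA hcut => ?_⟩
  rw [mem_acl_pimg hg.map_antipode] at hx
  obtain ⟨b, hb, hbx⟩ := (mem_acl_iff_harg o).1 hx
  obtain ⟨c, hc, hcy⟩ := (mem_acl_iff_harg o).1 hy
  have hxg : harg o x = φ (harg o (g.symm x)) := by rw [← (hgc _).2, Equiv.apply_symm_apply]
  rw [hxg, ← hbx, ← hcy]
  refine hφ _ (Finset.mem_image_of_mem _ hb) _ (Finset.mem_image_of_mem _ hc) ?_ fun r hr => ?_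
  · simp only [R, hcy, Finset.mem_insert, Finset.mem_image, not_or, not_exists, not_and]
    exact ⟨(harg_lt_half o y).ne, fun a ha h => hyA ((mem_acl_iff_harg o).2 ⟨a, ha, h⟩)⟩
  · rcases Finset.mem_insert.1 hr with rfl | hr
    · exact iff_of_true (harg_lt_half o _) (harg_lt_half o _)
    · obtain ⟨a, ha, rfl⟩ := Finset.mem_image.1 hr
      rw [hbx, hcy, ← hcut a ha, hxg, ← φ.lt_iff_lt, hφR _ (hR a ha)]

theorem exists_autoS2_piecewise {B D : Finset S2} {g : Equiv.Perm S2} {o : S2} (ho : o ∈ D)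
    (hg : AutoS2 g) (hfix : ∀ b ∈ B, b ∈ D → g b = b) (hinj : ∀ b ∈ B, ∀ y ∈ D, g b = y → b = y)
    (hrel : ∀ b ∈ B, ∀ y ∈ D, (s2rel (g b) y ↔ s2rel b y) ∧ (s2rel y (g b) ↔ s2rel y b)) :
    ∃ h : Equiv.Perm S2, AutoS2 h ∧ Fixes h D ∧ ∀ b ∈ B, h b = g b := by
  let p : S2 → S2 := fun x => if x ∈ B then g x else x
  have hpD : ∀ x ∈ D, p x = x := fun x hx => by
    simp only [p, ite_eq_right_iff]; exact fun hxB => hfix x hxB hx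
  have hD : ∀ x ∈ B ∪ D, x ∉ B → x ∈ D := fun x hx hxB => (Finset.mem_union.1 hx).resolve_left hxB
  have hprel : ∀ x ∈ B ∪ D, ∀ y ∈ B ∪ D, s2rel (p x) (p y) ↔ s2rel x y := by
    intro x hx y hy
    by_cases hxB : x ∈ B <;> by_cases hyB : y ∈ B <;> simp only [p, hxB, hyB, if_true, if_false]
    · exact hg x y
    · exact (hrel x hxB y (hD y hy hyB)).1
    · exact (hrel y hyB x (hD x hx hxB)).2
  have hpinj : Set.InjOn p ↑(B ∪ D) := by
    intro x hx y hy hxy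
    by_cases hxB : x ∈ B <;> by_cases hyB : y ∈ B <;>
      simp only [p, hxB, hyB, if_true, if_false] at hxy
    · exact g.injective hxy
    · exact hinj x hxB y (hD y hy hyB) hxy
    · exact (hinj y hyB x (hD x hx hxB) hxy.symm).symm
    · exact hxy
  obtain ⟨h, hh, hhp⟩ :=
    exists_autoS2_extend (Finset.mem_union_right B ho) (hpD o ho) hpinj hprel
  exact ⟨h, hh, fun x hx => (hhp x (Finset.mem_union_right B hx)).trans (hpD x hx),
    fun b hb => (hhp b (Finset.mem_union_left D hb)).trans (if_pos hb)⟩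

theorem exists_autoS2_extend_of_indep {A B B' C : Finset S2} {g : Equiv.Perm S2}
    (hA : A.Nonempty) (hBC : Indep A B C) (hB'C : Indep A B' C) (hg : AutoS2 g)
    (hgA : Fixes g A) (hgB : pimg g B = B') :
    ∃ h : Equiv.Perm S2, AutoS2 h ∧ Fixes h (A ∪ C) ∧ ∀ b ∈ B, h b = g b := by
  obtain ⟨o, ho⟩ := hA
  have stab : ∀ b ∈ B, ∀ y, y ∈ acl (A ∪ C) → (s2rel (g b) y ↔ s2rel b y) :=
    fun b hb y hy => hBC.s2rel_apply_iff ho hB'C hg hgA (mem_acl_of_mem hb)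
      (mem_acl_of_mem (hgB ▸ apply_mem_pimg.2 hb)) (mem_acl_union.1 hy)
  have hrel : ∀ b ∈ B, ∀ y ∈ A ∪ C, (s2rel (g b) y ↔ s2rel b y) ∧ (s2rel y (g b) ↔ s2rel y b) := by
    intro b hb y hy
    refine ⟨stab b hb y (mem_acl_of_mem hy), ?_⟩
    rw [← s2rel_antipode_right, ← s2rel_antipode_right (x := b)]
    exact stab b hb _ (antipode_mem_acl.2 (mem_acl_of_mem hy))
  have fix : ∀ b ∈ B, b ∈ acl (A ∪ C) → g b = b := fun b hb h =>
    hg.apply_eq_of_mem_acl hgA ((mem_acl_union.1 h).elim id (hBC.mem_acl (mem_acl_of_mem hb)))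
  refine exists_autoS2_piecewise (Finset.mem_union_left C ho) hg
    (fun b hb hbD => fix b hb (mem_acl_of_mem hbD)) (fun b hb y hy hby => ?_) hrel
  have hu : ¬ s2rel b y ∧ ¬ s2rel y b := by
    rw [← (hrel b hb y hy).1, ← (hrel b hb y hy).2, hby]
    exact ⟨s2rel_irrefl y, s2rel_irrefl y⟩
  rcases unrelated_iff.1 hu with rfl | rfl
  · rfl
  · have := fix b hb (antipode_mem_acl.1 (mem_acl_of_mem hy))
    exact absurd (this.symm.trans hby) (antipode_ne b).symm

lemma reflect_involutive : Function.Involutive fun x : S2 => mk (-x.1) := fun x => by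
  show mk (-Int.fract (-x.1)) = x
  rw [show -Int.fract (-x.1) = x.1 + ((⌊-x.1⌋ : ℤ) : ℚ) by rw [Int.fract]; ring, mk_add_intCast,
    mk_val]

def reflect : Equiv.Perm S2 := reflect_involutive.toPerm _

lemma reflect_apply (x : S2) : reflect x = mk (-x.1) := rfl

lemma reflect_reflect (x : S2) : reflect (reflect x) = x := reflect_involutive x

lemma reflect_symm : reflect.symm = reflect := reflect_involutive.symm_eq_self_of_involutive

lemma s2rel_reflect (x y : S2) : s2rel (reflect x) (reflect y) ↔ s2rel y x := by
  have h : Int.fract ((reflect y).1 - (reflect x).1) = Int.fract (x.1 - y.1) :=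
    Int.fract_eq_fract.2 ⟨⌊-x.1⌋ - ⌊-y.1⌋, by
      rw [reflect_apply, reflect_apply]; simp only [mk, Int.fract]; push_cast; ring⟩
  unfold s2rel; rw [h]

lemma reflect_antipode (x : S2) : reflect (antipode x) = antipode (reflect x) := by
  rw [reflect_apply, reflect_apply, antipode_mk]
  exact Subtype.ext (Int.fract_eq_fract.2 ⟨⌊x.1 + 1/2⌋ - 1, by
    simp only [antipode, mk, Int.fract]; push_cast; ring⟩)

lemma pimg_reflect_reflect (A : Finset S2) : pimg reflect (pimg reflect A) = A := by
  ext x; simp [pimg, Finset.mem_map_equiv, reflect_symm]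

section Reflect

variable {g : Equiv.Perm S2} {A B C : Finset S2}

lemma AutoS2.conj_reflect (hg : AutoS2 g) : AutoS2 (reflect * g * reflect) := fun a b => by
  rw [Equiv.Perm.mul_apply, Equiv.Perm.mul_apply, Equiv.Perm.mul_apply, Equiv.Perm.mul_apply,
    s2rel_reflect, hg, s2rel_reflect]

lemma Fixes.conj_reflect (hgA : Fixes g A) : Fixes (reflect * g * reflect) (pimg reflect A) := by
  intro x hx
  rw [pimg, Finset.mem_map_equiv, reflect_symm] at hx
  simp only [Equiv.Perm.mul_apply, hgA _ hx, reflect_reflect]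

lemma sameType_pimg_reflect {x y : S2} :
    SameType (pimg reflect A) x y ↔ SameType A (reflect x) (reflect y) := by
  simp only [SameType, pimg, Finset.forall_mem_map, Equiv.coe_toEmbedding]
  refine forall₂_congr fun a _ => ?_
  rw [← reflect_reflect x, ← reflect_reflect y, s2rel_reflect, s2rel_reflect, s2rel_reflect,
    s2rel_reflect, reflect_reflect, reflect_reflect]
  exact and_comm

lemma Indep.reflect (h : Indep A B C) :
    Indep (pimg reflect A) (pimg reflect C) (pimg reflect B) := by
  intro c hc b hb hcA hbA hcb
  rw [mem_acl_pimg reflect_antipode, reflect_symm] at hc hb hcA hbA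
  rw [sameType_pimg_reflect] at hcb
  rw [← s2rel_reflect]
  exact h _ hb _ hc hbA hcA hcb.symm

end Reflect

theorem exists_indep_right {A : Finset S2} (hA : A.Nonempty) (B C : Finset S2) :
    ∃ C', EquivOver AutoS2 A C C' ∧ Indep A B C' := by
  obtain ⟨C'', ⟨g, hg, hgA, hgC⟩, hind⟩ :=
    exists_indep_left (A := pimg reflect A) hA.map (pimg reflect C) (pimg reflect B)
  refine ⟨pimg reflect C'', ⟨reflect * g * reflect, hg.conj_reflect, ?_, ?_⟩, ?_⟩
  · simpa only [pimg_reflect_reflect] using hgA.conj_reflect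
  · rw [pimg_mul, pimg_mul, hgC]
  · simpa only [pimg_reflect_reflect] using hind.reflect

theorem exists_autoS2_extend_of_indep_right {A B C C' : Finset S2} {g : Equiv.Perm S2}
    (hA : A.Nonempty) (hBC : Indep A B C) (hBC' : Indep A B C') (hg : AutoS2 g)
    (hgA : Fixes g A) (hgC : pimg g C = C') :
    ∃ h : Equiv.Perm S2, AutoS2 h ∧ Fixes h (A ∪ B) ∧ ∀ c ∈ C, h c = g c := by
  obtain ⟨h, hh, hhf, hhg⟩ := exists_autoS2_extend_of_indep (A := pimg reflect A) hA.map
    hBC.reflect hBC'.reflect hg.conj_reflect hgA.conj_reflect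
    (by rw [pimg_mul, pimg_mul, pimg_reflect_reflect, hgC])
  refine ⟨reflect * h * reflect, hh.conj_reflect, fun x hx => ?_, fun c hc => ?_⟩
  · have hx' : reflect x ∈ pimg reflect A ∪ pimg reflect B :=
      Finset.mem_union.2 ((Finset.mem_union.1 hx).imp apply_mem_pimg.2 apply_mem_pimg.2)
    simp only [Equiv.Perm.mul_apply, hhf _ hx', reflect_reflect]
  · rw [Equiv.Perm.mul_apply, Equiv.Perm.mul_apply, hhg _ (apply_mem_pimg.2 hc)]
    simp only [Equiv.Perm.mul_apply, reflect_reflect]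

/-- the dense local order `S(2)` has a local SWIR. -/
theorem S2_has_localSWIR :
    ∃ Ind : Finset S2 → Finset S2 → Finset S2 → Prop, IsLocalSWIR AutoS2 Ind :=
  ⟨Indep, {
    inv := fun _ _ _ _ _ _ _ hg h => h.map hg
    exLeft := fun _ B C hA _ _ => exists_indep_left hA B C
    exRight := fun _ B C hA _ _ => exists_indep_right hA B C
    staLeft := fun _ _ _ _ hA _ _ _ hBC hB'C _ hg hgA hgB =>
      exists_autoS2_extend_of_indep hA hBC hB'C hg hgA hgB
    staRight := fun _ _ _ _ hA _ _ _ hBC hBC' _ hg hgA hgC =>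
      exists_autoS2_extend_of_indep_right hA hBC hBC' hg hgA hgC
    monLeft := fun _ _ _ _ _ _ _ _ h =>
      ⟨h.mono_left Finset.subset_union_left,
        (h.mono_left Finset.subset_union_right).mono_base Finset.subset_union_left⟩
    monRight := fun _ _ _ _ _ _ _ _ h =>
      ⟨h.mono_right Finset.subset_union_left,
        (h.mono_right Finset.subset_union_right).mono_base Finset.subset_union_left⟩ }⟩

end Stmt16
end

section
/- Let M be a set with an irreflexive, asymmetric binary relation →; for x, y ∈ M write x ⊥ y if x ≠ y and neither x → y nor y → x, and suppose the relation 'x = y or x ⊥ y' is an equivalence relation on M, whose classes are called parts. Suppose further that: (parity) for all u₀ ≠ u₁ lying in a common part and all v₀ ≠ v₁ lying in a common part different from that of u₀, the number of pairs (i,j) with uᵢ → vⱼ is even; (infinite parts) every part of M is infinite; (extension) for every finite subset S of M and every function ε : S → {0,1} there exists e ∈ M such that e lies in no part meeting S, and for each s ∈ S one has s → e if ε(s) = 1 and e → s if ε(s) = 0. Then M has no automorphism τ with τ ∘ τ = id and τ ≠ id; that is, the automorphism group of M contains no involutions. -/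
open scoped Classical

namespace Stmt17

/-- `x ⊥ y`: `x` and `y` are distinct and non-adjacent. -/
def Perp {M : Type*} (r : M → M → Prop) (x y : M) : Prop := x ≠ y ∧ ¬ r x y ∧ ¬ r y x

/-- `x` and `y` lie in a common part. -/
def SamePart {M : Type*} (r : M → M → Prop) (x y : M) : Prop := x = y ∨ Perp r x y

/-- an ω-partite tournament satisfying the parity condition, having all
parts infinite and with the stated extension property (for example the semigeneric
ω-partite tournament) has no involutions in its automorphism group. -/
theorem semigeneric_no_involutions {M : Type*} (r : M → M → Prop)
    (hirr : ∀ x, ¬ r x x) (hasymm : ∀ x y, r x y → ¬ r y x)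
    (hequiv : Equivalence (SamePart r))
    (hparity : ∀ u₀ u₁ v₀ v₁ : M, u₀ ≠ u₁ → SamePart r u₀ u₁ →
      v₀ ≠ v₁ → SamePart r v₀ v₁ → ¬ SamePart r u₀ v₀ →
      Even ((if r u₀ v₀ then 1 else 0) + (if r u₀ v₁ then 1 else 0) +
            (if r u₁ v₀ then 1 else 0) + (if r u₁ v₁ then 1 else 0) : ℕ))
    (hinf : ∀ x : M, {y : M | SamePart r x y}.Infinite)
    (hext : ∀ (S : Finset M) (ε : M → Bool), ∃ e : M,
      (∀ s ∈ S, ¬ SamePart r e s) ∧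
      ∀ s ∈ S, if ε s then r s e else r e s) :
    ¬ ∃ τ : Equiv.Perm M, (∀ x y : M, r (τ x) (τ y) ↔ r x y) ∧ ⇑τ ∘ ⇑τ = id ∧ τ ≠ 1 := by
  rintro ⟨τ, hτr, hτ2, hτne⟩
  have hττ : ∀ x, τ (τ x) = x := fun x => congrFun hτ2 x
  -- every point lies in the same part as its image
  have key : ∀ x, SamePart r x (τ x) := by
    intro x
    by_cases hx : x = τ x
    · exact Or.inl hx
    · refine Or.inr ⟨hx, ?_, ?_⟩
      · intro h
        have h2 : r (τ x) (τ (τ x)) := (hτr x (τ x)).mpr h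
        rw [hττ] at h2
        exact hasymm _ _ h h2
      · intro h
        have h2 : r (τ (τ x)) (τ x) := (hτr (τ x) x).mpr h
        rw [hττ] at h2
        exact hasymm _ _ h h2
  -- a moved point
  obtain ⟨a, ha⟩ : ∃ a, τ a ≠ a := by
    by_contra h
    push_neg at h
    exact hτne (Equiv.ext h)
  -- a companion a' in the part of a, distinct from a and τ a
  obtain ⟨a', ha'⟩ :=
    ((hinf a).diff (Set.toFinite ({a, τ a} : Set M))).nonempty
  obtain ⟨haa' : SamePart r a a', ha'n⟩ := ha'
  simp only [Set.mem_insert_iff, Set.mem_singleton_iff, not_or] at ha'n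
  obtain ⟨ha'a, ha'ta⟩ := ha'n
  -- extension point
  set S : Finset M := {a, τ a, a', τ a'} with hS
  set ε : M → Bool := fun x => if x = τ a then false else true with hε
  obtain ⟨e, he1, he2⟩ := hext S ε
  have hamem : a ∈ S := by simp [hS]
  have htamem : τ a ∈ S := by simp [hS]
  have ha'mem : a' ∈ S := by simp [hS]
  have hta'mem : τ a' ∈ S := by simp [hS]
  have hane : a ≠ τ a := fun h => ha h.symm
  have hta'ne : τ a' ≠ τ a := fun h => ha'a (τ.injective h)
  -- prescribed edges
  have hae : r a e := by
    have := he2 a hamem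
    simpa [hε, if_neg hane] using this
  have ha'e : r a' e := by
    have := he2 a' ha'mem
    simpa [hε, if_neg ha'ta] using this
  have hta'e : r (τ a') e := by
    have := he2 (τ a') hta'mem
    rw [hε] at this
    simp only [if_neg hta'ne, if_pos rfl] at this
    exact this
  have heta : r e (τ a) := by
    have := he2 (τ a) htamem
    simpa [hε] using this
  -- derived edges at τ e
  have ha'te : r a' (τ e) := by
    have h2 : r (τ (τ a')) (τ e) := (hτr (τ a') e).mpr hta'e
    rwa [hττ] at h2
  have hnate : ¬ r a (τ e) := by
    intro h
    have h2 : r (τ a) (τ (τ e)) := (hτr a (τ e)).mpr h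
    rw [hττ] at h2
    exact hasymm _ _ heta h2
  -- e ≠ τ e
  have hete : e ≠ τ e := by
    intro h
    have h2 : r (τ e) (τ (τ a)) := (hτr e (τ a)).mpr heta
    rw [hττ] at h2
    rw [← h] at h2
    exact hasymm _ _ hae h2
  -- parity violation
  have hnae : ¬ SamePart r a e := fun h => he1 a hamem (hequiv.symm h)
  have := hparity a a' e (τ e) (fun h => ha'a h.symm) haa' hete (key e) hnae
  rw [if_pos hae, if_neg hnate, if_pos ha'e, if_pos ha'te] at this
  exact (by decide : ¬ Even 3) (by norm_num at this)

end Stmt17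
end

section
/- Fix 2 < n < ω. Let M be the generic n-partite tournament: a countably infinite n-partite tournament which is ultrahomogeneous (every isomorphism between finite induced substructures of M extends to an automorphism of M) and into which every finite n-partite tournament embeds. Then M does not have a local SWIR: there is no ternary relation on the nonempty finite subsets of M satisfying (Inv), (Ex), (Sta) and (Mon). -/
/-!
Suppose `⫫` were a local SWIR. Take `w → c₁, …, c_{n-1}` with the `cᵢ` forming a transitive
tournament, so that `w, c₁, …, c_{n-1}` meet all `n` parts, and by (Ex) pick `x ≡_w c₁` with
`x ⫫_w {c₁, …, c_{n-1}}`; then `w → x` and, by (Mon), `x ⫫_w cᵢ` for every `i`. Any two `cᵢ, cⱼ`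
are conjugate over `w`, so (Sta) yields an automorphism fixing `w` and `x` that moves `cᵢ` to
`cⱼ`. Hence if `x` shared a part with some `cᵢ`, it would share it with another `cⱼ` (there is
one as `n > 2`), which is impossible; and `x` is not in the part of `w` since `w → x`. So `x`
lies in an `(n+1)`-st part.
-/

namespace Stmt18

open scoped Classical

variable {M : Type*}

/-- The permutation `g` fixes the finite set `A` pointwise. -/
def Fixes (g : Equiv.Perm M) (A : Finset M) : Prop := ∀ a ∈ A, g a = a

/-- The image `g(A)` of a finite set under a permutation. -/
def pimg (g : Equiv.Perm M) (A : Finset M) : Finset M := A.map g.toEmbedding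

/-- `B ≡_A B'` : some automorphism (with respect to the predicate `Auto`) fixes `A`
pointwise and maps `B` onto `B'`. -/
def EquivOver (Auto : Equiv.Perm M → Prop) (A B B' : Finset M) : Prop :=
  ∃ g : Equiv.Perm M, Auto g ∧ Fixes g A ∧ pimg g B = B'

/-- A local SWIR: a ternary relation `Ind` on the nonempty finite subsets of `M`
(`Ind A B C` is read `B ⫫_A C`) satisfying (Inv), (Ex), (Sta) and (Mon) with respect to
the automorphisms of `M` (the permutations satisfying `Auto`). -/
structure IsLocalSWIR (Auto : Equiv.Perm M → Prop)
    (Ind : Finset M → Finset M → Finset M → Prop) : Prop where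
  inv : ∀ A B C : Finset M, A.Nonempty → B.Nonempty → C.Nonempty →
    ∀ g : Equiv.Perm M, Auto g → Ind A B C → Ind (pimg g A) (pimg g B) (pimg g C)
  exLeft : ∀ A B C : Finset M, A.Nonempty → B.Nonempty → C.Nonempty →
    ∃ B' : Finset M, EquivOver Auto A B B' ∧ Ind A B' C
  exRight : ∀ A B C : Finset M, A.Nonempty → B.Nonempty → C.Nonempty →
    ∃ C' : Finset M, EquivOver Auto A C C' ∧ Ind A B C'
  staLeft : ∀ A B B' C : Finset M, A.Nonempty → B.Nonempty → B'.Nonempty → C.Nonempty →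
    Ind A B C → Ind A B' C →
    ∀ g : Equiv.Perm M, Auto g → Fixes g A → pimg g B = B' →
      ∃ h : Equiv.Perm M, Auto h ∧ Fixes h (A ∪ C) ∧ ∀ b ∈ B, h b = g b
  staRight : ∀ A B C C' : Finset M, A.Nonempty → B.Nonempty → C.Nonempty → C'.Nonempty →
    Ind A B C → Ind A B C' →
    ∀ g : Equiv.Perm M, Auto g → Fixes g A → pimg g C = C' →
      ∃ h : Equiv.Perm M, Auto h ∧ Fixes h (A ∪ B) ∧ ∀ c ∈ C, h c = g c
  monLeft : ∀ A B C D : Finset M, A.Nonempty → B.Nonempty → C.Nonempty → D.Nonempty →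
    Ind A (B ∪ D) C → Ind A B C ∧ Ind (A ∪ B) D C
  monRight : ∀ A B C D : Finset M, A.Nonempty → B.Nonempty → C.Nonempty → D.Nonempty →
    Ind A B (C ∪ D) → Ind A B C ∧ Ind (A ∪ C) B D

/-- `x ⊥ y`: `x` and `y` are distinct and non-adjacent. -/
def Perp {V : Type*} (r : V → V → Prop) (x y : V) : Prop := x ≠ y ∧ ¬ r x y ∧ ¬ r y x

/-- `x` and `y` lie in a common part. -/
def SamePart {V : Type*} (r : V → V → Prop) (x y : V) : Prop := x = y ∨ Perp r x y

/-- An `n`-partite tournament: an oriented graph in which `SamePart` is an equivalence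
relation with at most `n` classes. -/
structure IsNPartiteTournament {V : Type*} (n : ℕ) (r : V → V → Prop) : Prop where
  irrefl : ∀ x, ¬ r x x
  asymm : ∀ x y, r x y → ¬ r y x
  equiv : Equivalence (SamePart r)
  parts_le : ∀ v : Fin (n + 1) → V, ∃ i j, i ≠ j ∧ SamePart r (v i) (v j)

def IsAut (r : M → M → Prop) (g : Equiv.Perm M) : Prop := ∀ a b : M, r (g a) (g b) ↔ r a b

def IsUltrahomogeneous (r : M → M → Prop) : Prop :=
  ∀ (A B : Finset M) (h : (↑A : Set M) → (↑B : Set M)), Function.Bijective h →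
    (∀ x y : (↑A : Set M), r (x : M) (y : M) ↔ r (h x : M) (h y : M)) →
    ∃ g : Equiv.Perm M, IsAut r g ∧ ∀ x : (↑A : Set M), g (x : M) = (h x : M)

@[simp]
lemma pimg_singleton (g : Equiv.Perm M) (a : M) : pimg g {a} = {g a} := by
  simp [pimg]

@[simp]
lemma fixes_singleton {g : Equiv.Perm M} {a : M} : Fixes g {a} ↔ g a = a := by
  simp [Fixes]

lemma SamePart.map {r : M → M → Prop} {g : Equiv.Perm M} (hg : IsAut r g) {a b : M}
    (h : SamePart r a b) : SamePart r (g a) (g b) := by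
  rcases h with rfl | ⟨hne, hab, hba⟩
  · exact Or.inl rfl
  · exact Or.inr ⟨g.injective.ne hne, fun h => hab ((hg a b).1 h), fun h => hba ((hg b a).1 h)⟩

lemma IsUltrahomogeneous.exists_isAut_eqOn {r : M → M → Prop} (ultra : IsUltrahomogeneous r)
    (A : Finset M) {φ : M → M} (hφ : Set.InjOn φ A)
    (hr : ∀ x ∈ A, ∀ y ∈ A, r x y ↔ r (φ x) (φ y)) :
    ∃ g : Equiv.Perm M, IsAut r g ∧ ∀ x ∈ A, g x = φ x := by
  let h : (↑A : Set M) → (↑(A.image φ) : Set M) :=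
    fun x => ⟨φ x, Finset.mem_image_of_mem φ x.2⟩
  have hbij : Function.Bijective h := by
    refine ⟨fun x y hxy => Subtype.ext (hφ x.2 y.2 (congrArg Subtype.val hxy)), ?_⟩
    rintro ⟨y, hy⟩
    obtain ⟨x, hx, rfl⟩ := Finset.mem_image.1 hy
    exact ⟨⟨x, hx⟩, rfl⟩
  obtain ⟨g, hg, hgh⟩ := ultra A _ h hbij fun x y => hr x x.2 y y.2
  exact ⟨g, hg, fun x hx => hgh ⟨x, hx⟩⟩

section Tournament

variable {V : Type*} {n : ℕ} {r : V → V → Prop}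

lemma IsNPartiteTournament.not_samePart_of_rel (hM : IsNPartiteTournament n r) {x y : V}
    (h : r x y) : ¬ SamePart r x y := by
  rintro (rfl | ⟨-, hxy, -⟩)
  exacts [hM.irrefl x h, hxy h]

lemma IsNPartiteTournament.exists_samePart (hM : IsNPartiteTournament n r) (x : V)
    {f : Fin n → V} (hf : Pairwise fun i j => ¬ SamePart r (f i) (f j)) :
    ∃ i, SamePart r x (f i) := by
  by_contra! hx
  obtain ⟨i, j, hij, hsame⟩ := hM.parts_le (Fin.cons x f)
  induction i using Fin.cases <;> induction j using Fin.cases <;>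
    simp only [Fin.cons_zero, Fin.cons_succ] at hsame
  · exact hij rfl
  · exact hx _ hsame
  · exact hx _ (hM.equiv.symm hsame)
  · exact hf (fun h => hij (by rw [h])) hsame

lemma isNPartiteTournament_lt [LinearOrder V] [Fintype V] (hV : Fintype.card V ≤ n) :
    IsNPartiteTournament n (· < · : V → V → Prop) := by
  have hsame : SamePart (· < · : V → V → Prop) = Eq := by
    ext x y
    refine ⟨?_, Or.inl⟩
    rintro (h | ⟨hne, hxy, hyx⟩)
    exacts [h, absurd (lt_or_gt_of_ne hne) (not_or.2 ⟨hxy, hyx⟩)]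
  refine ⟨fun x => lt_irrefl x, fun _ _ => lt_asymm, hsame ▸ eq_equivalence, fun v => ?_⟩
  obtain ⟨i, j, hij, hv⟩ := Fintype.exists_ne_map_eq_of_card_lt v (by simp; omega)
  exact ⟨i, j, hij, Or.inl hv⟩

end Tournament

lemma IsNPartiteTournament.exists_isAut_fix_map {n : ℕ} {r : M → M → Prop}
    (hM : IsNPartiteTournament n r) (ultra : IsUltrahomogeneous r) {w u v : M}
    (hu : r w u) (hv : r w v) : ∃ g : Equiv.Perm M, IsAut r g ∧ g w = w ∧ g u = v := by
  have hwu : w ≠ u := fun h => hM.irrefl w (h ▸ hu)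
  have hwv : w ≠ v := fun h => hM.irrefl w (h ▸ hv)
  have hw : Equiv.swap u v w = w := Equiv.swap_apply_of_ne_of_ne hwu hwv
  obtain ⟨g, hg, hgφ⟩ := ultra.exists_isAut_eqOn {w, u} (Equiv.swap u v).injective.injOn (by
    simp only [Finset.mem_insert, Finset.mem_singleton]
    rintro x (rfl | rfl) y (rfl | rfl) <;>
      simp [hw, hu, hv, hM.irrefl, hM.asymm _ _ hu, hM.asymm _ _ hv])
  exact ⟨g, hg, by simpa [hw] using hgφ w (by simp), by simpa using hgφ u (by simp)⟩

namespace IsLocalSWIR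

variable {Auto : Equiv.Perm M → Prop} {Ind : Finset M → Finset M → Finset M → Prop}

lemma exists_equivOver_forall_indep (H : IsLocalSWIR Auto Ind) {A B C : Finset M}
    (hA : A.Nonempty) (hB : B.Nonempty) (hC : C.Nontrivial) :
    ∃ B', EquivOver Auto A B B' ∧ ∀ c ∈ C, Ind A B' {c} := by
  obtain ⟨B', hBB', hInd⟩ := H.exLeft A B C hA hB hC.nonempty
  have hB' : B'.Nonempty := by
    obtain ⟨g, -, -, rfl⟩ := hBB'
    exact hB.map
  refine ⟨B', hBB', fun c hc => ?_⟩
  refine (H.monRight A B' {c} (C.erase c) hA hB' (Finset.singleton_nonempty c)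
    hC.erase_nonempty ?_).1
  rwa [← Finset.insert_eq, Finset.insert_erase hc]

lemma exists_fix_map_of_indep (H : IsLocalSWIR Auto Ind) {A : Finset M} {x c d : M}
    (hA : A.Nonempty) (hc : Ind A {x} {c}) (hd : Ind A {x} {d}) {g : Equiv.Perm M}
    (hg : Auto g) (hgA : Fixes g A) (hgc : g c = d) :
    ∃ h : Equiv.Perm M, Auto h ∧ h x = x ∧ h c = d := by
  obtain ⟨h, hh, hfix, hhg⟩ := H.staRight A {x} {c} {d} hA (Finset.singleton_nonempty x)
    (Finset.singleton_nonempty c) (Finset.singleton_nonempty d) hc hd g hg hgA (by simp [hgc])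
  exact ⟨h, hh, hfix x (by simp), by simpa [hgc] using hhg c (by simp)⟩

lemma exists_rel_forall_not_samePart {n : ℕ} {r : M → M → Prop}
    (H : IsLocalSWIR (IsAut r) Ind) (hM : IsNPartiteTournament n r)
    (ultra : IsUltrahomogeneous r) {w : M} {C : Finset M} (hC : C.Nontrivial)
    (hwC : ∀ c ∈ C, r w c) (hCparts : (C : Set M).Pairwise fun c d => ¬ SamePart r c d) :
    ∃ x, r w x ∧ ∀ c ∈ C, ¬ SamePart r x c := by
  obtain ⟨u, hu⟩ := hC.nonempty
  obtain ⟨_, ⟨g, hg, hgw, rfl⟩, hind⟩ := H.exists_equivOver_forall_indep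
    (Finset.singleton_nonempty w) (Finset.singleton_nonempty u) hC
  rw [fixes_singleton] at hgw
  rw [pimg_singleton] at hind
  refine ⟨g u, by simpa [hgw] using (hg w u).2 (hwC u hu), fun c hc hxc => ?_⟩
  obtain ⟨d, hd, hdc⟩ := hC.exists_ne c
  obtain ⟨k, hk, hkw, hkc⟩ := hM.exists_isAut_fix_map ultra (hwC c hc) (hwC d hd)
  obtain ⟨h, hh, hhx, hhc⟩ := H.exists_fix_map_of_indep (Finset.singleton_nonempty w)
    (hind c hc) (hind d hd) hk (fixes_singleton.2 hkw) hkc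
  have hxd : SamePart r (g u) d := by simpa [hhx, hhc] using hxc.map hh
  exact hCparts hc hd hdc.symm (hM.equiv.trans (hM.equiv.symm hxc) hxd)

end IsLocalSWIR

theorem generic_nPartite_no_localSWIR_general
    {n : ℕ} (hn : 2 < n)
    (r : M → M → Prop) (hM : IsNPartiteTournament n r)
    (ultra : ∀ (A B : Finset M) (h : (↑A : Set M) → (↑B : Set M)), Function.Bijective h →
      (∀ x y : (↑A : Set M), r (x : M) (y : M) ↔ r (h x : M) (h y : M)) →
      ∃ g : Equiv.Perm M, (∀ a b : M, r (g a) (g b) ↔ r a b) ∧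
        ∀ x : (↑A : Set M), g (x : M) = (h x : M))
    (univ : ∀ (k : ℕ) (r' : Fin k → Fin k → Prop), IsNPartiteTournament n r' →
      ∃ f : Fin k → M, Function.Injective f ∧ ∀ x y, r' x y ↔ r (f x) (f y)) :
    ¬ ∃ Ind : Finset M → Finset M → Finset M → Prop,
        IsLocalSWIR (fun g : Equiv.Perm M => ∀ a b : M, r (g a) (g b) ↔ r a b) Ind := by
  rintro ⟨Ind, H⟩
  obtain ⟨m, rfl⟩ : ∃ m, n = m + 1 := ⟨n - 1, by omega⟩
  obtain ⟨f, hf, hfr⟩ := univ (m + 1) (· < ·) (isNPartiteTournament_lt (by simp))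
  have hparts : Pairwise fun i j => ¬ SamePart r (f i) (f j) := by
    intro i j hij
    rcases hij.lt_or_gt with h | h
    · exact hM.not_samePart_of_rel ((hfr i j).1 h)
    · exact fun hs => hM.not_samePart_of_rel ((hfr j i).1 h) (hM.equiv.symm hs)
  set C := Finset.univ.image (f ∘ Fin.succ)
  have hC : C.Nontrivial := by
    rw [← Finset.one_lt_card_iff_nontrivial, Finset.card_image_of_injective _
      (hf.comp (Fin.succ_injective m)), Finset.card_univ, Fintype.card_fin]
    omega
  have hwC : ∀ c ∈ C, r (f 0) c := by
    simpa [C] using fun i : Fin m => (hfr 0 i.succ).1 i.succ_pos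
  have hCparts : (C : Set M).Pairwise fun c d => ¬ SamePart r c d := by
    simp only [C, Finset.coe_image, Finset.coe_univ, Set.image_univ]
    rintro _ ⟨i, rfl⟩ _ ⟨j, rfl⟩ hne
    exact hparts fun hij => hne (by rw [Fin.succ_injective m hij])
  obtain ⟨x, hwx, hx⟩ := H.exists_rel_forall_not_samePart hM ultra hC hwC hCparts
  obtain ⟨i, hxi⟩ := hM.exists_samePart x hparts
  induction i using Fin.cases with
  | zero => exact hM.not_samePart_of_rel hwx (hM.equiv.symm hxi)
  | succ i => exact hx _ (by simp [C]) hxi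

/-- for `2 < n < ω`, the generic `n`-partite tournament (a countably infinite,
ultrahomogeneous `n`-partite tournament into which every finite `n`-partite tournament
embeds) does not have a local SWIR. -/
theorem generic_nPartite_no_localSWIR
    {n : ℕ} (hn : 2 < n) [Countable M] [Infinite M]
    (r : M → M → Prop) (hM : IsNPartiteTournament n r)
    (ultra : ∀ (A B : Finset M) (h : (↑A : Set M) → (↑B : Set M)), Function.Bijective h →
      (∀ x y : (↑A : Set M), r (x : M) (y : M) ↔ r (h x : M) (h y : M)) →
      ∃ g : Equiv.Perm M, (∀ a b : M, r (g a) (g b) ↔ r a b) ∧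
        ∀ x : (↑A : Set M), g (x : M) = (h x : M))
    (univ : ∀ (k : ℕ) (r' : Fin k → Fin k → Prop), IsNPartiteTournament n r' →
      ∃ f : Fin k → M, Function.Injective f ∧ ∀ x y, r' x y ↔ r (f x) (f y)) :
    ¬ ∃ Ind : Finset M → Finset M → Finset M → Prop,
        IsLocalSWIR (fun g : Equiv.Perm M => ∀ a b : M, r (g a) (g b) ↔ r a b) Ind :=
  generic_nPartite_no_localSWIR_general hn r hM ultra univ

end Stmt18
end
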